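/- arXiv:1909.11921 — 3 statements merged into one kernel-verified Lean document; each statement's English description precedes it below -/
import Mathlib

section
/- For a mixed stopping strategy p̂, the equilibrium condition (EqI): J_p̂(x) ≥ q f(x) + (1−q) E_x[E_{X_1}[f(X_{τ_p̂})]] + g(q h(x) + (1−q) E_x[E_{X_1}[h(X_{τ_p̂})]]) for all q ∈ [0,1] and all x ∈ E, is equivalent to each of the following three conditions: (EqII) φ_p̂(x) + g(ψ_p̂(x)) ≥ K(x,q,p̂) for all q ∈ [0,1] and all x ∈ E; (EqIII) φ_p̂(x) + g(ψ_p̂(x)) = max_{q∈[0,1]} K(x,q,p̂) for all x ∈ E; (EqIV) p̂_x ∈ argmax_{q∈[0,1]} K(x,q,p̂) for all x ∈ E. -/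
/-!
Analytic model of the time-inconsistent stopping framework of Christensen & Lindensjö,
"Time-inconsistent stopping, myopic adjustment & equilibrium stability".

A time-homogeneous Markov chain `X` on a finite state space `E` is encoded by its
transition matrix `P` (`P x y = P_x(X_1 = y)`).  A mixed stopping strategy is a vector
`p ∈ [0,1]^E`; the associated stopping time is `τ_p = min {n ≥ 0 : Y_n ≤ p_{X_n}}`,
where the `Y_n` are i.i.d. uniform randomization devices.  The quantity
`phi P p f x = E_x[f(X_{τ_p})]` (with the convention `f(X_{τ_p}) := lim_n f(X_n)` on
`{τ_p = ∞}`, the limit existing a.s. by absorption) is realized analytically, via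
dominated convergence, as the limit in `n` of the finite-horizon values
`phiSeq P p f n x = E_x[f(X_{τ_p ∧ n})]`, which satisfy the one-step recursion given
by the Markov property.  Likewise `step P v x = E_x[v(X_1)]`.
-/

open Filter

variable {E : Type*}

/-- One-step expectation operator: `step P v x = E_x[v(X_1)] = ∑ y, P x y * v y`. -/
noncomputable def step [Fintype E] (P : E → E → ℝ) (v : E → ℝ) (x : E) : ℝ :=
  ∑ y, P x y * v y

/-- Finite-horizon value `phiSeq P p f n x = E_x[f(X_{τ_p ∧ n})]`. -/
noncomputable def phiSeq [Fintype E] (P : E → E → ℝ) (p f : E → ℝ) : ℕ → E → ℝ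
  | 0 => f
  | n + 1 => fun x => p x * f x + (1 - p x) * step P (phiSeq P p f n) x

/-- `phi P p f x = E_x[f(X_{τ_p})]`, with the convention `f(X_{τ_p}) := lim_n f(X_n)`
on `{τ_p = ∞}`; by dominated convergence it is the limit of the finite-horizon values. -/
noncomputable def phi [Fintype E] (P : E → E → ℝ) (p f : E → ℝ) (x : E) : ℝ :=
  limUnder atTop fun n => phiSeq P p f n x

/-- `P` is a transition matrix (row-stochastic). -/
def IsTransition [Fintype E] (P : E → E → ℝ) : Prop :=
  (∀ x y, 0 ≤ P x y) ∧ ∀ x, ∑ y, P x y = 1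

/-- `a` is an absorbing state of the chain. -/
def IsAbsorbingState (P : E → E → ℝ) (a : E) : Prop := P a a = 1

/-- The chain is absorbing: from each starting state, some absorbing state is reached
with positive probability in a finite number of steps. -/
def IsAbsorbingChain [Fintype E] [DecidableEq E] (P : E → E → ℝ) : Prop :=
  ∀ x : E, ∃ (a : E) (n : ℕ), IsAbsorbingState P a ∧ 0 < ((Matrix.of P) ^ n) x a

/-- A mixed stopping strategy: a vector in `[0,1]^E`. -/
def IsStrategy (p : E → ℝ) : Prop := ∀ x, p x ∈ Set.Icc (0 : ℝ) 1

/-- `Kval P f h g p x q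
      = q f(x) + (1-q) E_x[φ_p(X_1)] + g (q h(x) + (1-q) E_x[ψ_p(X_1)])`. -/
noncomputable def Kval [Fintype E] (P : E → E → ℝ) (f h : E → ℝ) (g : ℝ → ℝ)
    (p : E → ℝ) (x : E) (q : ℝ) : ℝ :=
  q * f x + (1 - q) * step P (phi P p f) x
    + g (q * h x + (1 - q) * step P (phi P p h) x)

/-- `Jval P f h g p x = φ_p(x) + g(ψ_p(x)) = E_x[f(X_{τ_p})] + g(E_x[h(X_{τ_p})])`. -/
noncomputable def Jval [Fintype E] (P : E → E → ℝ) (f h : E → ℝ) (g : ℝ → ℝ)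
    (p : E → ℝ) (x : E) : ℝ :=
  phi P p f x + g (phi P p h x)

/-- Subgame perfect Nash equilibrium (condition (EqI)). -/
def IsEquilibrium [Fintype E] (P : E → E → ℝ) (f h : E → ℝ) (g : ℝ → ℝ)
    (p : E → ℝ) : Prop :=
  ∀ x : E, ∀ q ∈ Set.Icc (0 : ℝ) 1, Kval P f h g p x q ≤ Jval P f h g p x

/-!
Evaluating `K(x, ·, p̂)` at `q = p̂_x` gives `J_p̂(x)`, because `φ_p̂` and `ψ_p̂` solve the
one-step equation `φ = p̂ f + (1 - p̂) P φ`; so each of the four conditions says that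
`q = p̂_x` maximises `K(x, ·, p̂)` on `[0, 1]`. The one-step equation passes to the limit from
the finite-horizon recursion, whose increments are dominated by the probability that the chain
is not yet absorbed; for an absorbing chain that probability decays geometrically, so the
increments are summable.
-/

namespace Matrix

variable {m n R : Type*} [Fintype n]

theorem mulVec_mono_of_nonneg [Semiring R] [PartialOrder R] [IsOrderedRing R]
    {M : Matrix m n R} (hM : ∀ i j, 0 ≤ M i j) {v w : n → R} (hvw : v ≤ w) :
    M *ᵥ v ≤ M *ᵥ w :=
  fun i => Finset.sum_le_sum fun j _ => mul_le_mul_of_nonneg_left (hvw j) (hM i j)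

theorem abs_mulVec_le_of_nonneg [Ring R] [LinearOrder R] [IsOrderedRing R]
    {M : Matrix m n R} (hM : ∀ i j, 0 ≤ M i j) (v : n → R) : |M *ᵥ v| ≤ M *ᵥ |v| := by
  intro i
  simp only [Pi.abs_apply, mulVec, dotProduct]
  refine (Finset.abs_sum_le_sum_abs _ _).trans_eq (Finset.sum_congr rfl fun j _ => ?_)
  rw [abs_mul, abs_of_nonneg (hM i j)]

end Matrix

open Matrix
open scoped Topology

def transientStates (P : E → E → ℝ) : Set E := {y | ¬IsAbsorbingState P y}

section Transition

variable [Fintype E] {P : E → E → ℝ}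

theorem step_eq_mulVec (P : E → E → ℝ) (v : E → ℝ) : step P v = Matrix.of P *ᵥ v := rfl

theorem IsTransition.eq_zero_of_isAbsorbingState (hP : IsTransition P) {a y : E}
    (ha : IsAbsorbingState P a) (hy : y ≠ a) : P a y = 0 := by
  classical
  have hrest : ∑ z ∈ Finset.univ.erase a, P a z = 0 := by
    have := Finset.add_sum_erase Finset.univ (P a) (Finset.mem_univ a)
    rw [hP.2 a, ha] at this
    linarith
  exact (Finset.sum_eq_zero_iff_of_nonneg fun z _ => hP.1 a z).1 hrest y (by simpa using hy)

theorem IsTransition.step_of_isAbsorbingState (hP : IsTransition P) {a : E}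
    (ha : IsAbsorbingState P a) (v : E → ℝ) : step P v a = v a := by
  rw [step, Finset.sum_eq_single a
    (fun y _ hy => by rw [hP.eq_zero_of_isAbsorbingState ha hy, zero_mul]) (by simp), ha, one_mul]

theorem abs_le_sum_abs_smul_indicator_transientStates {v : E → ℝ}
    (hv : ∀ a, IsAbsorbingState P a → v a = 0) :
    |v| ≤ (∑ y, |v y|) • (transientStates P).indicator 1 := by
  intro x
  by_cases hx : IsAbsorbingState P x
  · simp [hv x hx, transientStates, hx]
  · simpa [transientStates, hx] using
      Finset.single_le_sum (fun y _ => abs_nonneg (v y)) (Finset.mem_univ x)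

theorem phiSeq_succ_succ_sub (p f : E → ℝ) (n : ℕ) :
    phiSeq P p f (n + 2) - phiSeq P p f (n + 1)
      = (1 - p) * (Matrix.of P *ᵥ (phiSeq P p f (n + 1) - phiSeq P p f n)) := by
  ext x
  change p x * f x + (1 - p x) * step P (phiSeq P p f (n + 1)) x
      - (p x * f x + (1 - p x) * step P (phiSeq P p f n) x) = _
  rw [mulVec_sub, step_eq_mulVec, step_eq_mulVec]
  simp only [Pi.mul_apply, Pi.sub_apply, Pi.one_apply]
  ring

theorem IsTransition.phiSeq_one_sub_zero_of_isAbsorbingState (hP : IsTransition P) {a : E}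
    (ha : IsAbsorbingState P a) (p f : E → ℝ) : phiSeq P p f 1 a - phiSeq P p f 0 a = 0 := by
  change p a * f a + (1 - p a) * step P f a - f a = 0
  rw [hP.step_of_isAbsorbingState ha]
  ring

end Transition

section Absorption

variable [Fintype E] [DecidableEq E] {P : E → E → ℝ}

theorem IsTransition.mem_rowStochastic (hP : IsTransition P) :
    Matrix.of P ∈ rowStochastic ℝ E :=
  mem_rowStochastic_iff_sum.2 hP

theorem IsTransition.pow_nonneg (hP : IsTransition P) (n : ℕ) (x y : E) :
    0 ≤ (Matrix.of P ^ n) x y :=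
  nonneg_of_mem_rowStochastic (pow_mem hP.mem_rowStochastic n)

/-- `survival P n x = P_x(X_n is not an absorbing state)`. -/
noncomputable def survival (P : E → E → ℝ) (n : ℕ) : E → ℝ :=
  Matrix.of P ^ n *ᵥ (transientStates P).indicator 1

theorem survival_zero : survival P 0 = (transientStates P).indicator 1 := by
  rw [survival, pow_zero, one_mulVec]

theorem survival_add (m n : ℕ) : survival P (m + n) = Matrix.of P ^ m *ᵥ survival P n := by
  rw [survival, survival, pow_add, mulVec_mulVec]

theorem IsTransition.survival_nonneg (hP : IsTransition P) (n : ℕ) : 0 ≤ survival P n :=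
  nonneg_mulVec_of_mem_rowStochastic (pow_mem hP.mem_rowStochastic n)
    (Set.indicator_nonneg fun _ _ => zero_le_one)

theorem IsTransition.survival_one_le_zero (hP : IsTransition P) :
    survival P 1 ≤ survival P 0 := by
  intro x
  rw [survival, pow_one, survival_zero, ← step_eq_mulVec]
  by_cases hx : IsAbsorbingState P x
  · rw [hP.step_of_isAbsorbingState hx]
  · have hle : (transientStates P).indicator (1 : E → ℝ) ≤ 1 :=
      Set.indicator_le_self' fun _ _ => zero_le_one
    calc step P ((transientStates P).indicator 1) x ≤ (Matrix.of P *ᵥ 1) x :=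
          mulVec_mono_of_nonneg hP.1 hle x
      _ = (transientStates P).indicator 1 x := by
          rw [one_vecMul_of_mem_rowStochastic hP.mem_rowStochastic]
          simp [transientStates, hx]

theorem IsTransition.survival_antitone (hP : IsTransition P) : Antitone (survival P) :=
  antitone_nat_of_succ_le fun n =>
    calc survival P (n + 1) = Matrix.of P ^ n *ᵥ survival P 1 := survival_add n 1
      _ ≤ Matrix.of P ^ n *ᵥ survival P 0 :=
          mulVec_mono_of_nonneg (hP.pow_nonneg n) hP.survival_one_le_zero
      _ = survival P n := (survival_add n 0).symm

theorem IsTransition.survival_le_one_sub (hP : IsTransition P) {a : E}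
    (ha : IsAbsorbingState P a) (n : ℕ) (x : E) :
    survival P n x ≤ 1 - (Matrix.of P ^ n) x a := by
  have hχ : (transientStates P).indicator 1 ≤ (1 : E → ℝ) - Pi.single a 1 := by
    intro y
    by_cases hy : y = a
    · subst hy
      simp [transientStates, ha]
    · by_cases h : IsAbsorbingState P y <;> simp [transientStates, h, hy]
  have := mulVec_mono_of_nonneg (hP.pow_nonneg n) hχ x
  rwa [mulVec_sub, one_vecMul_of_mem_rowStochastic (pow_mem hP.mem_rowStochastic n),
    mulVec_single_one] at this

theorem IsAbsorbingChain.eventually_survival_lt_one (habs : IsAbsorbingChain P)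
    (hP : IsTransition P) : ∀ᶠ n in atTop, ∀ y, survival P n y < 1 := by
  refine eventually_all.2 fun y => ?_
  obtain ⟨a, m, ha, hpos⟩ := habs y
  refine eventually_atTop.2 ⟨m, fun n hn => ?_⟩
  calc survival P n y ≤ survival P m y := hP.survival_antitone hn y
    _ ≤ 1 - (Matrix.of P ^ m) y a := hP.survival_le_one_sub ha m y
    _ < 1 := by linarith

theorem IsTransition.survival_add_le_smul (hP : IsTransition P) {N : ℕ} {M : ℝ}
    (hM : ∀ y, survival P N y ≤ M) (n : ℕ) : survival P (n + N) ≤ M • survival P n := by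
  have hN : survival P N ≤ M • (transientStates P).indicator 1 := by
    intro y
    by_cases hy : IsAbsorbingState P y
    · have := hP.survival_antitone (Nat.zero_le N) y
      simpa [survival_zero, transientStates, hy] using this
    · simpa [transientStates, hy] using hM y
  calc survival P (n + N) = Matrix.of P ^ n *ᵥ survival P N := survival_add n N
    _ ≤ Matrix.of P ^ n *ᵥ (M • (transientStates P).indicator 1) :=
        mulVec_mono_of_nonneg (hP.pow_nonneg n) hN
    _ = M • survival P n := mulVec_smul _ _ _

theorem IsTransition.survival_mul_le_pow (hP : IsTransition P) {N : ℕ} {M : ℝ} (hM₀ : 0 ≤ M)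
    (hM : ∀ y, survival P N y ≤ M) (k : ℕ) (x : E) : survival P (N * k) x ≤ M ^ k := by
  induction k generalizing x with
  | zero =>
    rw [mul_zero, survival_zero, pow_zero]
    exact Set.indicator_le_self' (fun _ _ => zero_le_one) x
  | succ k ih =>
    calc survival P (N * k + N) x ≤ M * survival P (N * k) x :=
          hP.survival_add_le_smul hM _ x
      _ ≤ M * M ^ k := mul_le_mul_of_nonneg_left (ih x) hM₀
      _ = M ^ (k + 1) := (pow_succ' M k).symm

theorem IsAbsorbingChain.summable_survival (habs : IsAbsorbingChain P) (hP : IsTransition P)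
    (x : E) : Summable fun n => survival P n x := by
  obtain ⟨N, hlt, hN⟩ :=
    ((habs.eventually_survival_lt_one hP).and (eventually_gt_atTop 0)).exists
  have : NeZero N := ⟨hN.ne'⟩
  have : Nonempty E := ⟨x⟩
  obtain ⟨y₀, hy₀⟩ := Finite.exists_max (survival P N)
  have hM₀ : 0 ≤ survival P N y₀ := hP.survival_nonneg N y₀
  have hanti : Antitone fun n => survival P n x := fun m n hmn => hP.survival_antitone hmn x
  -- an antitone sequence is summable as soon as its subsequence along `N ℕ` is
  rw [← summable_indicator_mod_iff hanti ((0 : ℕ) : ZMod N),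
    summable_indicator_mod_iff_summable]
  exact (summable_geometric_of_lt_one hM₀ (hlt y₀)).of_nonneg_of_le
    (fun k => hP.survival_nonneg _ x) fun k => hP.survival_mul_le_pow hM₀ hy₀ k x

end Absorption

section FixedPoint

variable [Fintype E] [DecidableEq E] {P : E → E → ℝ} {p : E → ℝ}

theorem IsTransition.abs_phiSeq_succ_sub_le (hP : IsTransition P) (hp : IsStrategy p)
    (f : E → ℝ) (n : ℕ) :
    |phiSeq P p f (n + 1) - phiSeq P p f n|
      ≤ Matrix.of P ^ n *ᵥ |phiSeq P p f 1 - phiSeq P p f 0| := by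
  induction n with
  | zero => simp
  | succ n ih =>
    intro x
    have hpx : |1 - p x| ≤ 1 := abs_le.2 ⟨by linarith [(hp x).2], by linarith [(hp x).1]⟩
    rw [phiSeq_succ_succ_sub, pow_succ', ← mulVec_mulVec]
    calc |(1 - p) * (Matrix.of P *ᵥ (phiSeq P p f (n + 1) - phiSeq P p f n))| x
        = |1 - p x| * |(Matrix.of P *ᵥ (phiSeq P p f (n + 1) - phiSeq P p f n)) x| :=
          abs_mul _ _
      _ ≤ |(Matrix.of P *ᵥ (phiSeq P p f (n + 1) - phiSeq P p f n)) x| :=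
          mul_le_of_le_one_left (abs_nonneg _) hpx
      _ ≤ (Matrix.of P *ᵥ |phiSeq P p f (n + 1) - phiSeq P p f n|) x :=
          abs_mulVec_le_of_nonneg hP.1 _ x
      _ ≤ _ := mulVec_mono_of_nonneg hP.1 ih x

theorem IsAbsorbingChain.tendsto_phiSeq (habs : IsAbsorbingChain P) (hP : IsTransition P)
    (hp : IsStrategy p) (f : E → ℝ) (x : E) :
    Tendsto (fun n => phiSeq P p f n x) atTop (𝓝 (phi P p f x)) := by
  set W := ∑ y, |phiSeq P p f 1 y - phiSeq P p f 0 y|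
  have hinc (n : ℕ) :
      dist (phiSeq P p f n x) (phiSeq P p f (n + 1) x) ≤ W * survival P n x := by
    rw [Real.dist_eq, abs_sub_comm]
    calc |phiSeq P p f (n + 1) x - phiSeq P p f n x|
        ≤ (Matrix.of P ^ n *ᵥ |phiSeq P p f 1 - phiSeq P p f 0|) x :=
          hP.abs_phiSeq_succ_sub_le hp f n x
      _ ≤ (Matrix.of P ^ n *ᵥ (W • (transientStates P).indicator 1)) x :=
          mulVec_mono_of_nonneg (hP.pow_nonneg n) (abs_le_sum_abs_smul_indicator_transientStates
            fun a ha => hP.phiSeq_one_sub_zero_of_isAbsorbingState ha p f) x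
      _ = W * survival P n x := by rw [mulVec_smul]; rfl
  have hcauchy := cauchySeq_of_summable_dist
    (((habs.summable_survival hP x).mul_left W).of_nonneg_of_le (fun _ => dist_nonneg) hinc)
  exact tendsto_nhds_limUnder (cauchySeq_tendsto_of_complete hcauchy)

theorem IsAbsorbingChain.phi_eq (habs : IsAbsorbingChain P) (hP : IsTransition P)
    (hp : IsStrategy p) (f : E → ℝ) (x : E) :
    phi P p f x = p x * f x + (1 - p x) * step P (phi P p f) x :=
  tendsto_nhds_unique ((habs.tendsto_phiSeq hP hp f x).comp (tendsto_add_atTop_nat 1)) <|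
    tendsto_const_nhds.add <| Tendsto.const_mul _ <|
      tendsto_finsetSum _ fun y _ => (habs.tendsto_phiSeq hP hp f y).const_mul _

end FixedPoint

theorem equivalent_equilibrium_conditions_general [Fintype E] [DecidableEq E]
    (P : E → E → ℝ) (hP : IsTransition P) (habs : IsAbsorbingChain P)
    (f h : E → ℝ) (g : ℝ → ℝ)
    (phat : E → ℝ) (hphat : IsStrategy phat) :
    List.TFAE
      [ -- (EqI)
        ∀ x : E, ∀ q ∈ Set.Icc (0 : ℝ) 1,
          q * f x + (1 - q) * step P (phi P phat f) x
              + g (q * h x + (1 - q) * step P (phi P phat h) x)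
            ≤ Jval P f h g phat x,
        -- (EqII)
        ∀ x : E, ∀ q ∈ Set.Icc (0 : ℝ) 1,
          Kval P f h g phat x q ≤ phi P phat f x + g (phi P phat h x),
        -- (EqIII)
        ∀ x : E, IsGreatest ((fun q => Kval P f h g phat x q) '' Set.Icc (0 : ℝ) 1)
          (phi P phat f x + g (phi P phat h x)),
        -- (EqIV)
        ∀ x : E, IsMaxOn (fun q => Kval P f h g phat x q) (Set.Icc (0 : ℝ) 1) (phat x) ] := by
  have hK (x : E) : Kval P f h g phat x (phat x) = phi P phat f x + g (phi P phat h x) := by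
    rw [Kval, ← habs.phi_eq hP hphat f x, ← habs.phi_eq hP hphat h x]
  tfae_have 1 ↔ 2 := Iff.rfl
  tfae_have 2 → 4 := fun H x => isMaxOn_iff.2 fun q hq => (H x q hq).trans_eq (hK x).symm
  tfae_have 4 → 3 := fun H x => ⟨⟨phat x, hphat x, hK x⟩, by
    rintro _ ⟨q, hq, rfl⟩
    exact (isMaxOn_iff.1 (H x) q hq).trans_eq (hK x)⟩
  tfae_have 3 → 2 := fun H x q hq => (H x).2 ⟨q, hq, rfl⟩
  tfae_finish

/-- Proposition 2.8: the equilibrium condition (EqI) is equivalent to each of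
(EqII), (EqIII) and (EqIV). -/
theorem equivalent_equilibrium_conditions [Fintype E] [DecidableEq E]
    (P : E → E → ℝ) (hP : IsTransition P) (habs : IsAbsorbingChain P)
    (f h : E → ℝ) (g : ℝ → ℝ) (hg : Continuous g)
    (phat : E → ℝ) (hphat : IsStrategy phat) :
    List.TFAE
      [ -- (EqI)
        ∀ x : E, ∀ q ∈ Set.Icc (0 : ℝ) 1,
          q * f x + (1 - q) * step P (phi P phat f) x
              + g (q * h x + (1 - q) * step P (phi P phat h) x)
            ≤ Jval P f h g phat x,
        -- (EqII)
        ∀ x : E, ∀ q ∈ Set.Icc (0 : ℝ) 1,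
          Kval P f h g phat x q ≤ phi P phat f x + g (phi P phat h x),
        -- (EqIII)
        ∀ x : E, IsGreatest ((fun q => Kval P f h g phat x q) '' Set.Icc (0 : ℝ) 1)
          (phi P phat f x + g (phi P phat h x)),
        -- (EqIV)
        ∀ x : E, IsMaxOn (fun q => Kval P f h g phat x q) (Set.Icc (0 : ℝ) 1) (phat x) ] :=
  equivalent_equilibrium_conditions_general P hP habs f h g phat hphat
end

section
/- Suppose g is convex. Then a mixed stopping strategy p̂ is an equilibrium if and only if, for each x ∈ E, conditions (I) and (II) both hold and at least one of them holds with equality. -/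
/-!
Analytic model of the time-inconsistent stopping framework of Christensen & Lindensjö,
"Time-inconsistent stopping, myopic adjustment & equilibrium stability".

A time-homogeneous Markov chain `X` on a finite state space `E` is encoded by its
transition matrix `P` (`P x y = P_x(X_1 = y)`).  A mixed stopping strategy is a vector
`p ∈ [0,1]^E`; the associated stopping time is `τ_p = min {n ≥ 0 : Y_n ≤ p_{X_n}}`,
where the `Y_n` are i.i.d. uniform randomization devices.  The quantity
`phi P p f x = E_x[f(X_{τ_p})]` (with the convention `f(X_{τ_p}) := lim_n f(X_n)` on
`{τ_p = ∞}`, the limit existing a.s. by absorption) is realized analytically, via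
dominated convergence, as the limit in `n` of the finite-horizon values
`phiSeq P p f n x = E_x[f(X_{τ_p ∧ n})]`, which satisfy the one-step recursion given
by the Markov property.  Likewise `step P v x = E_x[v(X_1)]`.
-/

open Filter

variable {E : Type*}

/-! ### Auxiliary development -/

section Auxiliary

open Finset

set_option linter.unusedSectionVars false

variable [Fintype E] [DecidableEq E]

open Classical in
/-- Absorption indicator sequence: `sSeq P n x = P_x(X_n not yet absorbed)`. -/
noncomputable def sSeq (P : E → E → ℝ) : ℕ → E → ℝ
  | 0 => fun x => if P x x = 1 then 0 else 1
  | n + 1 => step P (sSeq P n)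

variable {P : E → E → ℝ}

theorem absorbing_row (hP : IsTransition P) {a : E} (ha : P a a = 1)
    {y : E} (hy : y ≠ a) : P a y = 0 := by
  have h1 : P a a + ∑ z ∈ Finset.univ.erase a, P a z = 1 := by
    rw [Finset.add_sum_erase _ _ (Finset.mem_univ a)]; exact hP.2 a
  have h2 : ∑ z ∈ Finset.univ.erase a, P a z = 0 := by linarith
  exact (Finset.sum_eq_zero_iff_of_nonneg (fun z _ => hP.1 a z)).mp h2 y
    (Finset.mem_erase.mpr ⟨hy, Finset.mem_univ y⟩)

theorem absorbing_step (hP : IsTransition P) {a : E} (ha : P a a = 1)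
    (v : E → ℝ) : step P v a = v a := by
  unfold step
  rw [Finset.sum_eq_single a]
  · rw [ha, one_mul]
  · intro y _ hy; rw [absorbing_row hP ha hy, zero_mul]
  · intro hmem; exact absurd (Finset.mem_univ a) hmem

theorem step_nonneg (hP : IsTransition P) {v : E → ℝ} (hv : ∀ y, 0 ≤ v y) (x : E) :
    0 ≤ step P v x :=
  Finset.sum_nonneg fun y _ => mul_nonneg (hP.1 x y) (hv y)

theorem step_le_one (hP : IsTransition P) {v : E → ℝ} (hv : ∀ y, v y ≤ 1) (x : E) :
    step P v x ≤ 1 := by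
  have : step P v x ≤ ∑ y, P x y :=
    Finset.sum_le_sum fun y _ => mul_le_of_le_one_right (hP.1 x y) (hv y)
  simpa [hP.2 x] using this

theorem step_mono (hP : IsTransition P) {u v : E → ℝ} (huv : ∀ y, u y ≤ v y) (x : E) :
    step P u x ≤ step P v x :=
  Finset.sum_le_sum fun y _ => mul_le_mul_of_nonneg_left (huv y) (hP.1 x y)

theorem abs_step_le (hP : IsTransition P) {v : E → ℝ} {M : ℝ} (hv : ∀ y, |v y| ≤ M)
    (x : E) : |step P v x| ≤ M := by
  calc |step P v x| ≤ ∑ y, |P x y * v y| := Finset.abs_sum_le_sum_abs _ _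
    _ = ∑ y, P x y * |v y| := by
        refine Finset.sum_congr rfl fun y _ => ?_
        rw [abs_mul, abs_of_nonneg (hP.1 x y)]
    _ ≤ ∑ y, P x y * M :=
        Finset.sum_le_sum fun y _ => mul_le_mul_of_nonneg_left (hv y) (hP.1 x y)
    _ = M := by rw [← Finset.sum_mul, hP.2 x, one_mul]

theorem sSeq_nonneg (hP : IsTransition P) : ∀ n x, 0 ≤ sSeq P n x
  | 0, x => by simp only [sSeq]; split <;> norm_num
  | n + 1, x => step_nonneg hP (sSeq_nonneg hP n) x

theorem sSeq_le_one (hP : IsTransition P) : ∀ n x, sSeq P n x ≤ 1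
  | 0, x => by simp only [sSeq]; split <;> norm_num
  | n + 1, x => step_le_one hP (sSeq_le_one hP n) x

theorem sSeq_absorbing (hP : IsTransition P) {a : E} (ha : P a a = 1) :
    ∀ n, sSeq P n a = 0
  | 0 => by simp only [sSeq, if_pos ha]
  | n + 1 => by
      show step P (sSeq P n) a = 0
      rw [absorbing_step hP ha, sSeq_absorbing hP ha n]

theorem sSeq_succ_le (hP : IsTransition P) : ∀ n x, sSeq P (n + 1) x ≤ sSeq P n x
  | 0, x => by
      by_cases hx : P x x = 1
      · show step P (sSeq P 0) x ≤ sSeq P 0 x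
        rw [absorbing_step hP hx]
      · calc sSeq P 1 x ≤ 1 := sSeq_le_one hP 1 x
          _ = sSeq P 0 x := by simp only [sSeq, if_neg hx]
  | n + 1, x => step_mono hP (sSeq_succ_le hP n) x

theorem sSeq_anti (hP : IsTransition P) {m n : ℕ} (hmn : m ≤ n) (x : E) :
    sSeq P n x ≤ sSeq P m x := by
  induction n, hmn using Nat.le_induction with
  | base => exact le_refl _
  | succ n hmn ih => exact (sSeq_succ_le hP n x).trans ih

theorem pow_entry_nonneg (hP : IsTransition P) : ∀ n x y, 0 ≤ ((Matrix.of P) ^ n) x y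
  | 0, x, y => by
      rw [pow_zero, Matrix.one_apply]
      split <;> norm_num
  | n + 1, x, y => by
      rw [pow_succ', Matrix.mul_apply]
      exact Finset.sum_nonneg fun z _ =>
        mul_nonneg (hP.1 x z) (pow_entry_nonneg hP n z y)

theorem pow_row_sum (hP : IsTransition P) : ∀ n x, ∑ y, ((Matrix.of P) ^ n) x y = 1
  | 0, x => by simp [Matrix.one_apply]
  | n + 1, x => by
      simp only [pow_succ', Matrix.mul_apply]
      rw [Finset.sum_comm]
      have : ∀ z, ∑ y, (Matrix.of P) x z * ((Matrix.of P) ^ n) z y = P x z := by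
        intro z
        rw [← Finset.mul_sum, pow_row_sum hP n z, mul_one]
        rfl
      rw [Finset.sum_congr rfl fun z _ => this z]
      exact hP.2 x

theorem sSeq_add (hP : IsTransition P) :
    ∀ m n x, sSeq P (m + n) x = ∑ y, ((Matrix.of P) ^ m) x y * sSeq P n y
  | 0, n, x => by
      rw [zero_add, pow_zero]
      simp [Matrix.one_apply]
  | m + 1, n, x => by
      have hstep : sSeq P (m + 1 + n) x = step P (sSeq P (m + n)) x := by
        have : m + 1 + n = (m + n) + 1 := by ring
        rw [this]
        rfl
      rw [hstep]
      unfold step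
      calc ∑ z, P x z * sSeq P (m + n) z
          = ∑ z, P x z * ∑ y, ((Matrix.of P) ^ m) z y * sSeq P n y := by
            refine Finset.sum_congr rfl fun z _ => ?_
            rw [sSeq_add hP m n z]
        _ = ∑ z, ∑ y, P x z * (((Matrix.of P) ^ m) z y * sSeq P n y) := by
            refine Finset.sum_congr rfl fun z _ => ?_
            rw [Finset.mul_sum]
        _ = ∑ y, ∑ z, P x z * (((Matrix.of P) ^ m) z y * sSeq P n y) := Finset.sum_comm
        _ = ∑ y, ((Matrix.of P) ^ (m + 1)) x y * sSeq P n y := by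
            refine Finset.sum_congr rfl fun y _ => ?_
            rw [pow_succ', Matrix.mul_apply, Finset.sum_mul]
            refine Finset.sum_congr rfl fun z _ => ?_
            rw [Matrix.of_apply]
            ring

theorem sSeq_decay [Nonempty E] (hP : IsTransition P) (habs : IsAbsorbingChain P) :
    ∃ (N : ℕ) (c : ℝ), 0 < N ∧ 0 ≤ c ∧ c < 1 ∧
      ∀ n x, sSeq P (n + N) x ≤ c * sSeq P n x := by
  choose afun nfun ha hpos using habs
  set N : ℕ := (Finset.univ.sup nfun) + 1 with hN
  have hNx : ∀ x, sSeq P N x < 1 := by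
    intro x
    have hle : nfun x ≤ N := le_trans (Finset.le_sup (Finset.mem_univ x)) (Nat.le_succ _)
    refine lt_of_le_of_lt (sSeq_anti hP hle x) ?_
    have hrew : sSeq P (nfun x) x
        = ∑ y, ((Matrix.of P) ^ (nfun x)) x y * sSeq P 0 y := by
      have := sSeq_add hP (nfun x) 0 x
      simpa using this
    have hsa : sSeq P 0 (afun x) = 0 := sSeq_absorbing hP (ha x) 0
    have hsplit : ∑ y, ((Matrix.of P) ^ (nfun x)) x y * sSeq P 0 y
        = ∑ y ∈ Finset.univ.erase (afun x), ((Matrix.of P) ^ (nfun x)) x y * sSeq P 0 y := by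
      rw [← Finset.add_sum_erase _ _ (Finset.mem_univ (afun x)), hsa, mul_zero, zero_add]
    have hbound : ∑ y ∈ Finset.univ.erase (afun x), ((Matrix.of P) ^ (nfun x)) x y * sSeq P 0 y
        ≤ ∑ y ∈ Finset.univ.erase (afun x), ((Matrix.of P) ^ (nfun x)) x y :=
      Finset.sum_le_sum fun y _ =>
        mul_le_of_le_one_right (pow_entry_nonneg hP _ x y) (sSeq_le_one hP 0 y)
    have herase : ∑ y ∈ Finset.univ.erase (afun x), ((Matrix.of P) ^ (nfun x)) x y
        = 1 - ((Matrix.of P) ^ (nfun x)) x (afun x) := by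
      have := Finset.add_sum_erase Finset.univ (fun y => ((Matrix.of P) ^ (nfun x)) x y)
        (Finset.mem_univ (afun x))
      have hrs := pow_row_sum hP (nfun x) x
      linarith [this.symm ▸ hrs]
    rw [hrew, hsplit]
    have := hpos x
    linarith [hbound, herase.le, herase.ge]
  set c : ℝ := Finset.univ.sup' Finset.univ_nonempty (fun x => sSeq P N x) with hc
  have hc1 : c < 1 := (Finset.sup'_lt_iff Finset.univ_nonempty).mpr fun x _ => hNx x
  have hc0 : 0 ≤ c :=
    le_trans (sSeq_nonneg hP N (Classical.arbitrary E))
      (Finset.le_sup' _ (Finset.mem_univ (Classical.arbitrary E)))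
  refine ⟨N, c, Nat.succ_pos _, hc0, hc1, ?_⟩
  intro n x
  have hkey : ∀ y, sSeq P N y ≤ c * sSeq P 0 y := by
    intro y
    by_cases hy : P y y = 1
    · rw [sSeq_absorbing hP hy, sSeq_absorbing hP hy, mul_zero]
    · have h0 : sSeq P 0 y = 1 := by simp only [sSeq, if_neg hy]
      rw [h0, mul_one]
      exact Finset.le_sup' _ (Finset.mem_univ y)
  calc sSeq P (n + N) x = ∑ y, ((Matrix.of P) ^ n) x y * sSeq P N y := sSeq_add hP n N x
    _ ≤ ∑ y, ((Matrix.of P) ^ n) x y * (c * sSeq P 0 y) :=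
        Finset.sum_le_sum fun y _ =>
          mul_le_mul_of_nonneg_left (hkey y) (pow_entry_nonneg hP n x y)
    _ = c * ∑ y, ((Matrix.of P) ^ n) x y * sSeq P 0 y := by
        rw [Finset.mul_sum]; refine Finset.sum_congr rfl fun y _ => ?_; ring
    _ = c * sSeq P n x := by
        have := sSeq_add hP n 0 x
        rw [show n + 0 = n from rfl] at this
        rw [this]

theorem sSeq_tendsto (hP : IsTransition P) (habs : IsAbsorbingChain P) (x : E) :
    Tendsto (fun n => sSeq P n x) atTop (nhds 0) := by
  haveI : Nonempty E := ⟨x⟩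
  obtain ⟨N, c, hN0, hc0, hc1, hdec⟩ := sSeq_decay hP habs
  have hkey : ∀ k r y, sSeq P (k * N + r) y ≤ c ^ k := by
    intro k
    induction k with
    | zero => intro r y; simpa using sSeq_le_one hP r y
    | succ k ih =>
        intro r y
        have hre : (k + 1) * N + r = (k * N + r) + N := by ring
        rw [hre, pow_succ]
        calc sSeq P ((k * N + r) + N) y ≤ c * sSeq P (k * N + r) y := hdec _ y
          _ ≤ c * c ^ k := mul_le_mul_of_nonneg_left (ih r y) hc0
          _ = c ^ k * c := mul_comm _ _
  have hub : ∀ n, sSeq P n x ≤ c ^ (n / N) := by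
    intro n
    have hd : (n / N) * N + n % N = n := by
      rw [mul_comm]; exact Nat.div_add_mod n N
    calc sSeq P n x = sSeq P ((n / N) * N + n % N) x := by rw [hd]
      _ ≤ c ^ (n / N) := hkey _ _ x
  have hdivtop : Tendsto (fun n : ℕ => n / N) atTop atTop := by
    apply Filter.tendsto_atTop_atTop.mpr
    intro b
    exact ⟨b * N, fun a hab => (Nat.le_div_iff_mul_le hN0).mpr hab⟩
  exact squeeze_zero (fun n => sSeq_nonneg hP n x) hub
    ((tendsto_pow_atTop_nhds_zero_of_lt_one hc0 hc1).comp hdivtop)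

variable {p f : E → ℝ}

theorem phiSeq_absorbing (hP : IsTransition P) {a : E} (ha : P a a = 1) :
    ∀ m, phiSeq P p f m a = f a
  | 0 => rfl
  | m + 1 => by
      show p a * f a + (1 - p a) * step P (phiSeq P p f m) a = f a
      rw [absorbing_step hP ha, phiSeq_absorbing hP ha m]
      ring

theorem phiSeq_bound (hP : IsTransition P) (hp : IsStrategy p) {M : ℝ}
    (hM : ∀ x, |f x| ≤ M) : ∀ n x, |phiSeq P p f n x| ≤ M
  | 0, x => hM x
  | n + 1, x => by
      have h1 : |step P (phiSeq P p f n) x| ≤ M := abs_step_le hP (phiSeq_bound hP hp hM n) x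
      have hp0 := (hp x).1
      have hp1 := (hp x).2
      calc |phiSeq P p f (n + 1) x|
          = |p x * f x + (1 - p x) * step P (phiSeq P p f n) x| := rfl
        _ ≤ |p x * f x| + |(1 - p x) * step P (phiSeq P p f n) x| := abs_add_le _ _
        _ = p x * |f x| + (1 - p x) * |step P (phiSeq P p f n) x| := by
            rw [abs_mul, abs_mul, abs_of_nonneg hp0, abs_of_nonneg (by linarith : (0:ℝ) ≤ 1 - p x)]
        _ ≤ p x * M + (1 - p x) * M := by
            have := mul_le_mul_of_nonneg_left (hM x) hp0
            have := mul_le_mul_of_nonneg_left h1 (by linarith : (0:ℝ) ≤ 1 - p x)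
            linarith
        _ = M := by ring

theorem phiSeq_diff (hP : IsTransition P) (hp : IsStrategy p) {M : ℝ}
    (hM : ∀ x, |f x| ≤ M) :
    ∀ n m x, |phiSeq P p f (n + m) x - phiSeq P p f n x| ≤ 2 * M * sSeq P n x
  | 0, m, x => by
      by_cases hx : P x x = 1
      · rw [zero_add]
        rw [sSeq_absorbing hP hx, phiSeq_absorbing hP hx m]
        show |f x - f x| ≤ 2 * M * 0
        simp
      · have h0 : sSeq P 0 x = 1 := by simp only [sSeq, if_neg hx]
        rw [zero_add, h0, mul_one]
        have h1 : |phiSeq P p f m x| ≤ M := phiSeq_bound hP hp hM m x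
        have h2 : |phiSeq P p f 0 x| ≤ M := hM x
        calc |phiSeq P p f m x - phiSeq P p f 0 x|
            ≤ |phiSeq P p f m x| + |phiSeq P p f 0 x| := abs_sub _ _
          _ ≤ 2 * M := by linarith
  | n + 1, m, x => by
      have hre : n + 1 + m = (n + m) + 1 := by ring
      have hp0 := (hp x).1
      have hp1 := (hp x).2
      have hexp : phiSeq P p f (n + 1 + m) x - phiSeq P p f (n + 1) x
          = (1 - p x) * (step P (phiSeq P p f (n + m)) x - step P (phiSeq P p f n) x) := by
        rw [hre]
        show (p x * f x + (1 - p x) * step P (phiSeq P p f (n + m)) x)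
            - (p x * f x + (1 - p x) * step P (phiSeq P p f n) x) = _
        ring
      have hdiffstep : |step P (phiSeq P p f (n + m)) x - step P (phiSeq P p f n) x|
          ≤ 2 * M * sSeq P (n + 1) x := by
        have heq : step P (phiSeq P p f (n + m)) x - step P (phiSeq P p f n) x
            = ∑ y, P x y * (phiSeq P p f (n + m) y - phiSeq P p f n y) := by
          unfold step
          rw [← Finset.sum_sub_distrib]
          refine Finset.sum_congr rfl fun y _ => ?_
          ring
        rw [heq]
        calc |∑ y, P x y * (phiSeq P p f (n + m) y - phiSeq P p f n y)|
            ≤ ∑ y, |P x y * (phiSeq P p f (n + m) y - phiSeq P p f n y)| :=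
              Finset.abs_sum_le_sum_abs _ _
          _ = ∑ y, P x y * |phiSeq P p f (n + m) y - phiSeq P p f n y| := by
              refine Finset.sum_congr rfl fun y _ => ?_
              rw [abs_mul, abs_of_nonneg (hP.1 x y)]
          _ ≤ ∑ y, P x y * (2 * M * sSeq P n y) :=
              Finset.sum_le_sum fun y _ =>
                mul_le_mul_of_nonneg_left (phiSeq_diff hP hp hM n m y) (hP.1 x y)
          _ = 2 * M * step P (sSeq P n) x := by
              unfold step
              rw [Finset.mul_sum]
              refine Finset.sum_congr rfl fun y _ => ?_
              ring
          _ = 2 * M * sSeq P (n + 1) x := rfl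
      have hM2 : 0 ≤ 2 * M * sSeq P (n + 1) x :=
        mul_nonneg (mul_nonneg (by norm_num) (le_trans (abs_nonneg _) (hM x)))
          (sSeq_nonneg hP _ _)
      calc |phiSeq P p f (n + 1 + m) x - phiSeq P p f (n + 1) x|
          = (1 - p x) * |step P (phiSeq P p f (n + m)) x - step P (phiSeq P p f n) x| := by
            rw [hexp, abs_mul, abs_of_nonneg (by linarith : (0:ℝ) ≤ 1 - p x)]
        _ ≤ 1 * (2 * M * sSeq P (n + 1) x) := by
            have h1 : (1 - p x) ≤ 1 := by linarith
            have := mul_le_mul_of_nonneg_left hdiffstep (by linarith : (0:ℝ) ≤ 1 - p x)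
            nlinarith [abs_nonneg (step P (phiSeq P p f (n + m)) x - step P (phiSeq P p f n) x)]
        _ = 2 * M * sSeq P (n + 1) x := one_mul _

theorem phi_tendsto (hP : IsTransition P) (habs : IsAbsorbingChain P)
    (hp : IsStrategy p) (x : E) :
    Tendsto (fun n => phiSeq P p f n x) atTop (nhds (phi P p f x)) := by
  haveI : Nonempty E := ⟨x⟩
  obtain ⟨M, hM⟩ : ∃ M : ℝ, ∀ y, |f y| ≤ M :=
    ⟨Finset.univ.sup' Finset.univ_nonempty fun y => |f y|,
      fun y => Finset.le_sup' (fun y => |f y|) (Finset.mem_univ y)⟩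
  have hM0 : 0 ≤ M := le_trans (abs_nonneg _) (hM x)
  have hcauchy : CauchySeq fun n => phiSeq P p f n x := by
    rw [Metric.cauchySeq_iff']
    intro ε hε
    have h0 : Tendsto (fun n => 2 * M * sSeq P n x) atTop (nhds 0) := by
      simpa using (sSeq_tendsto hP habs x).const_mul (2 * M)
    have hev : ∀ᶠ n in atTop, 2 * M * sSeq P n x < ε :=
      h0.eventually (gt_mem_nhds hε)
    obtain ⟨N0, hN0⟩ := eventually_atTop.mp hev
    refine ⟨N0, fun n hn => ?_⟩
    obtain ⟨m, rfl⟩ := Nat.exists_eq_add_of_le hn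
    rw [Real.dist_eq]
    calc |phiSeq P p f (N0 + m) x - phiSeq P p f N0 x| ≤ 2 * M * sSeq P N0 x :=
        phiSeq_diff hP hp hM N0 m x
      _ < ε := hN0 N0 le_rfl
  obtain ⟨l, hl⟩ := cauchySeq_tendsto_of_complete hcauchy
  have : phi P p f x = l := hl.limUnder_eq
  rwa [this]

theorem phi_rec (hP : IsTransition P) (habs : IsAbsorbingChain P)
    (hp : IsStrategy p) (x : E) :
    phi P p f x = p x * f x + (1 - p x) * step P (phi P p f) x := by
  have h1 : Tendsto (fun n => phiSeq P p f (n + 1) x) atTop (nhds (phi P p f x)) :=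
    (phi_tendsto hP habs hp x).comp (tendsto_add_atTop_nat 1)
  have hstep : Tendsto (fun n => step P (phiSeq P p f n) x) atTop
      (nhds (step P (phi P p f) x)) := by
    unfold step
    exact tendsto_finset_sum _ fun y _ => (phi_tendsto hP habs hp y).const_mul (P x y)
  have h2 : Tendsto (fun n => phiSeq P p f (n + 1) x) atTop
      (nhds (p x * f x + (1 - p x) * step P (phi P p f) x)) := by
    have := (hstep.const_mul (1 - p x)).const_add (p x * f x)
    exact this
  exact tendsto_nhds_unique h1 h2

end Auxiliary


/-- Corollary 4.4: for convex `g`, a strategy is an equilibrium iff, at each state,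
conditions (I) and (II) hold and at least one of them holds with equality. -/
theorem equilibrium_iff_convex [Fintype E] [DecidableEq E]
    (P : E → E → ℝ) (hP : IsTransition P) (habs : IsAbsorbingChain P)
    (f h : E → ℝ) (g : ℝ → ℝ) (hg : Continuous g) (hgc : ConvexOn ℝ Set.univ g)
    (phat : E → ℝ) (hphat : IsStrategy phat) :
    IsEquilibrium P f h g phat ↔
      ∀ x : E,
        (f x + g (h x) ≤ phi P phat f x + g (phi P phat h x)) ∧
        (step P (phi P phat f) x + g (step P (phi P phat h) x)
            ≤ phi P phat f x + g (phi P phat h x)) ∧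
        (phi P phat f x + g (phi P phat h x) = f x + g (h x) ∨
          phi P phat f x + g (phi P phat h x)
            = step P (phi P phat f) x + g (step P (phi P phat h) x)) := by
  have rf : ∀ x : E, phi P phat f x
      = phat x * f x + (1 - phat x) * step P (phi P phat f) x :=
    fun x => phi_rec hP habs hphat x
  have rh : ∀ x : E, phi P phat h x
      = phat x * h x + (1 - phat x) * step P (phi P phat h) x :=
    fun x => phi_rec hP habs hphat x
  constructor
  · intro heq x
    have hI : f x + g (h x) ≤ phi P phat f x + g (phi P phat h x) := by
      have := heq x 1 ⟨zero_le_one, le_refl 1⟩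
      simpa [Kval, Jval] using this
    have hII : step P (phi P phat f) x + g (step P (phi P phat h) x)
        ≤ phi P phat f x + g (phi P phat h x) := by
      have := heq x 0 ⟨le_refl 0, zero_le_one⟩
      simpa [Kval, Jval] using this
    refine ⟨hI, hII, ?_⟩
    have hq0 := (hphat x).1
    have hq1 := (hphat x).2
    have hconv : g (phi P phat h x)
        ≤ phat x * g (h x) + (1 - phat x) * g (step P (phi P phat h) x) := by
      have h2 := hgc.2 (Set.mem_univ (h x)) (Set.mem_univ (step P (phi P phat h) x))
        hq0 (by linarith : (0:ℝ) ≤ 1 - phat x) (by ring)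
      rw [smul_eq_mul, smul_eq_mul, smul_eq_mul, smul_eq_mul] at h2
      calc g (phi P phat h x)
          = g (phat x * h x + (1 - phat x) * step P (phi P phat h) x) := by rw [rh x]
        _ ≤ _ := h2
    have hid : phat x * ((phi P phat f x + g (phi P phat h x)) - (f x + g (h x)))
        + (1 - phat x) * ((phi P phat f x + g (phi P phat h x))
            - (step P (phi P phat f) x + g (step P (phi P phat h) x)))
        = g (phi P phat h x)
          - (phat x * g (h x) + (1 - phat x) * g (step P (phi P phat h) x)) := by
      rw [rf x]; ring
    have ht1 : 0 ≤ phat x * ((phi P phat f x + g (phi P phat h x)) - (f x + g (h x))) :=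
      mul_nonneg hq0 (by linarith)
    have ht2 : 0 ≤ (1 - phat x) * ((phi P phat f x + g (phi P phat h x))
        - (step P (phi P phat f) x + g (step P (phi P phat h) x))) :=
      mul_nonneg (by linarith) (by linarith)
    have hsum : phat x * ((phi P phat f x + g (phi P phat h x)) - (f x + g (h x)))
        + (1 - phat x) * ((phi P phat f x + g (phi P phat h x))
            - (step P (phi P phat f) x + g (step P (phi P phat h) x))) ≤ 0 := by
      rw [hid]; linarith
    rcases eq_or_lt_of_le hq0 with hq | hq
    · right
      have h2 : (1 - phat x) * ((phi P phat f x + g (phi P phat h x))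
          - (step P (phi P phat f) x + g (step P (phi P phat h) x))) = 0 := by linarith
      rw [← hq] at h2
      have := h2
      linarith [this]
    · left
      have h1 : phat x * ((phi P phat f x + g (phi P phat h x)) - (f x + g (h x))) = 0 := by
        linarith
      rcases mul_eq_zero.mp h1 with h' | h'
      · exact absurd h' (ne_of_gt hq)
      · linarith
  · intro hx x q hq
    obtain ⟨hI, hII, -⟩ := hx x
    have hq0 := hq.1
    have hq1 := hq.2
    have hconv : g (q * h x + (1 - q) * step P (phi P phat h) x)
        ≤ q * g (h x) + (1 - q) * g (step P (phi P phat h) x) := by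
      have h2 := hgc.2 (Set.mem_univ (h x)) (Set.mem_univ (step P (phi P phat h) x))
        hq0 (by linarith : (0:ℝ) ≤ 1 - q) (by ring)
      rw [smul_eq_mul, smul_eq_mul, smul_eq_mul, smul_eq_mul] at h2
      exact h2
    have hX1 := mul_le_mul_of_nonneg_left hI hq0
    have hX2 := mul_le_mul_of_nonneg_left hII (by linarith : (0:ℝ) ≤ 1 - q)
    show q * f x + (1 - q) * step P (phi P phat f) x
        + g (q * h x + (1 - q) * step P (phi P phat h) x)
        ≤ phi P phat f x + g (phi P phat h x)
    nlinarith [hconv, hX1, hX2]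
end

section
/- Suppose g is strictly convex. Then the myopic adjustment process p_{k+1} = Γ̄(p_k), started from any p_0 ∈ [0,1]^N, either does not converge but runs in cycles, or it terminates at a fixed point of Γ̄ in at most 2^N steps. (In particular Γ̄(p) ∈ {0,1}^N for every p, so the process after one step evolves among the 2^N pure strategies.) -/
/-!
Analytic model of the time-inconsistent stopping framework of Christensen & Lindensjö,
"Time-inconsistent stopping, myopic adjustment & equilibrium stability".

A time-homogeneous Markov chain `X` on a finite state space `E` is encoded by its
transition matrix `P` (`P x y = P_x(X_1 = y)`).  A mixed stopping strategy is a vector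
`p ∈ [0,1]^E`; the associated stopping time is `τ_p = min {n ≥ 0 : Y_n ≤ p_{X_n}}`,
where the `Y_n` are i.i.d. uniform randomization devices.  The quantity
`phi P p f x = E_x[f(X_{τ_p})]` (with the convention `f(X_{τ_p}) := lim_n f(X_n)` on
`{τ_p = ∞}`, the limit existing a.s. by absorption) is realized analytically, via
dominated convergence, as the limit in `n` of the finite-horizon values
`phiSeq P p f n x = E_x[f(X_{τ_p ∧ n})]`, which satisfy the one-step recursion given
by the Markov property.  Likewise `step P v x = E_x[v(X_1)]`.
-/

open Filter

variable {E : Type*}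

/-- The point-to-set mapping `Γ`: `Γ(p)` is the set of strategies `p*` such that, for
every state `x`, `p*_x` is a maximizer of `q ↦ K(x,q,p)` over `[0,1]`. -/
def Gamma [Fintype E] (P : E → E → ℝ) (f h : E → ℝ) (g : ℝ → ℝ)
    (p : E → ℝ) : Set (E → ℝ) :=
  {pstar | IsStrategy pstar ∧
    ∀ x : E, IsMaxOn (fun q => Kval P f h g p x q) (Set.Icc (0 : ℝ) 1) (pstar x)}

/-- Theorem 6.6: for strictly convex `g`, the myopic adjustment process
`p_{k+1} = Γ̄(p_k)` (where `Γ̄(p)` is the largest element of `Γ(p)`) takes values in the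
pure strategies, and either terminates at a fixed point of `Γ̄` in at most `2^N` steps
or does not converge but runs in cycles. -/
theorem myopic_adjustment_dichotomy [Fintype E] [DecidableEq E]
    (P : E → E → ℝ) (hP : IsTransition P) (habs : IsAbsorbingChain P)
    (f h : E → ℝ) (g : ℝ → ℝ) (hg : Continuous g) (hgc : StrictConvexOn ℝ Set.univ g)
    (Gbar : (E → ℝ) → (E → ℝ))
    (hGbar : ∀ p : E → ℝ, IsStrategy p →
      Gbar p ∈ Gamma P f h g p ∧ ∀ q ∈ Gamma P f h g p, q ≤ Gbar p)
    (pseq : ℕ → E → ℝ) (hp0 : IsStrategy (pseq 0))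
    (hrec : ∀ k : ℕ, pseq (k + 1) = Gbar (pseq k)) :
    (∀ p : E → ℝ, IsStrategy p → ∀ x : E, Gbar p x = 0 ∨ Gbar p x = 1) ∧
      ((∃ k ≤ 2 ^ Fintype.card E, Gbar (pseq k) = pseq k) ∨
        (∃ c ≥ 2, ∃ m : ℕ, ∀ k ≥ m, pseq (k + c) = pseq k ∧ pseq (k + 1) ≠ pseq k)) := by
  classical
  -- Part 1: Gbar takes values in {0,1}
  have key : ∀ p : E → ℝ, IsStrategy p → ∀ x : E, Gbar p x = 0 ∨ Gbar p x = 1 := by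
    intro p hp x
    obtain ⟨⟨hstrat, hmax⟩, hlarge⟩ := hGbar p hp
    set K : ℝ → ℝ := fun q => Kval P f h g p x q with hK
    set M := Gbar p x with hMdef
    have hM01 : M ∈ Set.Icc (0:ℝ) 1 := hstrat x
    have hKM : ∀ q ∈ Set.Icc (0:ℝ) 1, K q ≤ K M := fun q hq => (hmax x) hq
    have hK1 : K 1 ≤ K M := hKM 1 (by norm_num)
    have hK0 : K 0 ≤ K M := hKM 0 (by norm_num)
    -- convexity inequality : K M ≤ (1-M) * K 0 + M * K 1
    have hconv : K M ≤ (1 - M) * K 0 + M * K 1 := by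
      have hg' := hgc.convexOn.2 (Set.mem_univ (step P (phi P p h) x))
        (Set.mem_univ (h x)) (show (0:ℝ) ≤ 1 - M by linarith [hM01.2])
        (show (0:ℝ) ≤ M from hM01.1) (show (1:ℝ) - M + M = 1 by ring)
      simp only [smul_eq_mul] at hg'
      have hinner : M * h x + (1 - M) * step P (phi P p h) x
          = (1 - M) * step P (phi P p h) x + M * h x := by ring
      simp only [hK, Kval, hinner]
      have h0 : (0:ℝ) * h x + (1 - 0) * step P (phi P p h) x
          = step P (phi P p h) x := by ring
      have h1 : (1:ℝ) * h x + (1 - 1) * step P (phi P p h) x = h x := by ring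
      rw [h0, h1] at *
      nlinarith [hg']
    by_cases h1max : K M ≤ K 1
    · right
      -- 1 is also a maximizer, so by maximality of Gbar p we get M = 1
      have h1isMax : ∀ q ∈ Set.Icc (0:ℝ) 1, K q ≤ K 1 :=
        fun q hq => le_trans (hKM q hq) h1max
      set p' : E → ℝ := Function.update (Gbar p) x 1 with hp'
      have hp'mem : p' ∈ Gamma P f h g p := by
        constructor
        · intro y
          by_cases hyx : y = x
          · subst hyx; simp [hp', Function.update_self]
          · simpa [hp', Function.update_of_ne hyx] using hstrat y
        · intro y
          by_cases hyx : y = x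
          · subst hyx
            simp only [hp', Function.update_self]
            intro q hq
            exact h1isMax q hq
          · simpa [hp', Function.update_of_ne hyx] using hmax y
      have hle : p' ≤ Gbar p := hlarge p' hp'mem
      have : (1:ℝ) ≤ M := by
        have := hle x
        simpa [hp', Function.update_self] using this
      linarith [hM01.2]
    · left
      push_neg at h1max
      by_contra hM0
      have hMpos : 0 < M := lt_of_le_of_ne hM01.1 (Ne.symm hM0)
      have : K M < K M := by nlinarith [hM01.2]
      exact absurd this (lt_irrefl _)
  refine ⟨key, ?_⟩
  -- all iterates are strategies
  have hstrat_all : ∀ k, IsStrategy (pseq k) := by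
    intro k
    induction k with
    | zero => exact hp0
    | succ k ih => rw [hrec]; exact (hGbar _ ih).1.1
  have hval : ∀ k x, pseq (k + 1) x = 0 ∨ pseq (k + 1) x = 1 := by
    intro k x; rw [hrec]; exact key _ (hstrat_all k) x
  set N := Fintype.card E with hN
  by_cases hfix : ∃ k ≤ 2 ^ N, Gbar (pseq k) = pseq k
  · exact Or.inl hfix
  · push_neg at hfix
    -- pigeonhole : two equal iterates among pseq 1, ..., pseq (2^N+1)
    have hcard : Fintype.card (E → Bool) < Fintype.card (Fin (2 ^ N + 1)) := by
      simp [Fintype.card_fun, hN]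
    obtain ⟨i, j, hij, hFij⟩ :=
      Fintype.exists_ne_map_eq_of_card_lt
        (fun k : Fin (2 ^ N + 1) => fun x : E => decide (pseq (k.1 + 1) x = 1)) hcard
    -- reduce to ordered indices
    have hmain : ∀ i j : ℕ, i < j → j ≤ 2 ^ N → pseq (i + 1) = pseq (j + 1) →
        (∃ c ≥ 2, ∃ m : ℕ, ∀ k ≥ m, pseq (k + c) = pseq k ∧ pseq (k + 1) ≠ pseq k) := by
      intro i j hij hj2 heq
      set a := i + 1 with ha
      set b := j + 1 with hb
      have hab : a < b := by omega
      set d := b - a with hd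
      have hd1 : 1 ≤ d := by omega
      have hshift : ∀ t, pseq (a + t) = pseq (b + t) := by
        intro t
        induction t with
        | zero => simpa using heq
        | succ t ih =>
            have e1 : a + (t + 1) = (a + t) + 1 := by ring
            have e2 : b + (t + 1) = (b + t) + 1 := by ring
            rw [e1, e2, hrec, hrec, ih]
      have period : ∀ k, a ≤ k → pseq (k + d) = pseq k := by
        intro k hk
        obtain ⟨t, rfl⟩ := Nat.exists_eq_add_of_le hk
        have e : a + t + d = b + t := by omega
        rw [e]
        exact (hshift t).symm
      have hd2 : 2 ≤ d := by
        by_contra hlt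
        have : d = 1 := by omega
        have hb' : b = a + 1 := by omega
        have : Gbar (pseq a) = pseq a := by
          rw [← hrec a, ← hb']
          exact heq.symm
        exact hfix a (by omega) this
      refine ⟨d, hd2, a, ?_⟩
      intro k hk
      refine ⟨period k hk, ?_⟩
      -- descend to a representative in [a, a+d)
      have descent : ∀ k, a ≤ k → ∃ k', a ≤ k' ∧ k' < a + d ∧
          pseq k' = pseq k ∧ pseq (k' + 1) = pseq (k + 1) := by
        intro k
        induction k using Nat.strong_induction_on with
        | _ k ih =>
          intro hk
          by_cases hlt : k < a + d
          · exact ⟨k, hk, hlt, rfl, rfl⟩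
          · push_neg at hlt
            obtain ⟨k', h1, h2, h3, h4⟩ := ih (k - d) (by omega) (by omega)
            refine ⟨k', h1, h2, ?_, ?_⟩
            · rw [h3]
              have := period (k - d) (by omega)
              rw [show k - d + d = k from by omega] at this
              exact this.symm
            · rw [h4]
              have := period (k - d + 1) (by omega)
              rw [show k - d + 1 + d = k + 1 from by omega] at this
              exact this.symm
      intro habsurd
      obtain ⟨k', h1, h2, h3, h4⟩ := descent k hk
      have hfp : Gbar (pseq k') = pseq k' := by
        rw [← hrec k', h4, habsurd, ← h3]
      exact hfix k' (by omega) hfp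
    -- convert the pigeonhole equality into an equality of strategies
    have hpeq : pseq (i.1 + 1) = pseq (j.1 + 1) := by
      funext x
      have hx := congrFun hFij x
      simp only [decide_eq_decide] at hx
      rcases hval i.1 x with h0 | h0 <;> rcases hval j.1 x with h0' | h0'
      · rw [h0, h0']
      · rw [h0, h0'] at hx ⊢; norm_num at hx
      · rw [h0, h0'] at hx ⊢; norm_num at hx
      · rw [h0, h0']
    have hij' : i.1 ≠ j.1 := fun hc => hij (Fin.ext hc)
    rcases lt_or_gt_of_ne hij' with hlt | hlt
    · exact Or.inr (hmain i.1 j.1 hlt (by omega) hpeq)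
    · exact Or.inr (hmain j.1 i.1 hlt (by omega) hpeq.symm)
end
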